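/- Let M = (S, A, T, R, γ) be a DMDP with |S| = 2 states and |A| = k ≥ 2 actions. Then every sequence of policies π_0 ≺ π_1 ≺ … ≺ π_ℓ in which each π_{i+1} is obtained from π_i by policy improvement with max-gain action selection contains at most 7 policies; i.e., ℓ + 1 ≤ 7. In particular, any policy iteration algorithm performing max-gain action selection, started from any initial policy on M, evaluates at most 7 policies. -/
import Mathlib


open scoped Classical
open Finset

/-- Number of directed cycles in a finite directed multigraph on `Fin n`
specified by the edge-multiplicity function `G`: self-loops are cycles of
length 1, cycles of length `≥ 2` correspond to cyclic permutations, parallel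
edges give distinct cycles, and cycles are counted up to cyclic rotation. -/
noncomputable def cycleCount (n : ℕ) (G : Fin n → Fin n → ℕ) : ℕ :=
  (∑ v, G v v) +
  ∑ σ : Equiv.Perm (Fin n), if σ.IsCycle then ∏ v ∈ σ.support, G v (σ v) else 0

/-- Number of path-cycle subgraphs of a finite directed multigraph with
multiplicity function `G`: a path-cycle subgraph is given by a nonempty
vertex set `s` together with a successor map `f` on `s` (extended by the
identity off `s`) whose functional digraph on `s` is weakly connected and
has at most one source (vertex of indegree zero); parallel edges give
distinct path-cycles. -/
noncomputable def pathCycleCount {V : Type*} [Fintype V] [DecidableEq V]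
    (G : V → V → ℕ) : ℕ :=
  ∑ s : Finset V, ∑ f : V → V,
    if s.Nonempty ∧ (∀ v, v ∉ s → f v = v) ∧ (∀ v ∈ s, f v ∈ s) ∧
        (∀ u ∈ s, ∀ v ∈ s,
          Relation.ReflTransGen (fun a b => (a ∈ s ∧ f a = b) ∨ (b ∈ s ∧ f b = a)) u v) ∧
        (s.filter fun v => ∀ u ∈ s, f u ≠ v).card ≤ 1
    then ∏ v ∈ s, G v (f v) else 0

/-- `α(k) = (k - 1 + √((k-1)² + 4)) / 2`. -/
noncomputable def alphaK (k : ℕ) : ℝ :=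
  ((k : ℝ) - 1 + Real.sqrt (((k : ℝ) - 1) ^ 2 + 4)) / 2

/-- Multiplicity function of the digraph `G_{n,k}`: on vertices `Fin n`,
edges `(i, i+1 mod n)` have multiplicity `k - 1` and edges `(i, i+2 mod n)`
have multiplicity `1`. -/
def GnkMult (n k : ℕ) : Fin n → Fin n → ℕ := fun i j =>
  if (j.val + n - i.val) % n = 1 then k - 1
  else if (j.val + n - i.val) % n = 2 then 1
  else 0

/-- Multiplicity function of the digraph `G'_{n,k}`: on vertices `Fin n`,
edges `(i, i+1 mod n)` have multiplicity `1` and edges `(i, i+2 mod n)`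
have multiplicity `k - 1`. -/
def Gnk'Mult (n k : ℕ) : Fin n → Fin n → ℕ := fun i j =>
  if (j.val + n - i.val) % n = 1 then 1
  else if (j.val + n - i.val) % n = 2 then k - 1
  else 0

/-- Edge relation of the simple digraph `G_m`: `(i, j)` is an edge whenever
`j - i ≡ 1 (mod m)` or `j - i ≡ 2 (mod m)`. -/
def GmRel (m : ℕ) : Fin m → Fin m → Prop := fun i j =>
  (j.val + m - i.val) % m = 1 ∨ (j.val + m - i.val) % m = 2

/-- The sequence `S_m` with `S_0 = 1`, `S_1 = k - 1`,
`S_m = (k-1) S_{m-1} + S_{m-2}`. -/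
def Sseq (k : ℕ) : ℕ → ℕ
  | 0 => 1
  | 1 => k - 1
  | (m + 2) => (k - 1) * Sseq k (m + 1) + Sseq k m

/-- `F_k(n)`: the maximum number of directed cycles over all digraphs on `n`
vertices with every outdegree exactly `k` in which every multi-edge between
distinct vertices has multiplicity at most `k - 1`. -/
noncomputable def Fk (k n : ℕ) : ℕ :=
  sSup {c : ℕ | ∃ G : Fin n → Fin n → ℕ,
    (∀ v, (∑ u, G v u) = k) ∧ (∀ u v : Fin n, u ≠ v → G u v ≤ k - 1) ∧
    c = cycleCount n G}

/-- Weak connectivity (same connected component) in a directed multigraph. -/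
def MConn {n : ℕ} (G : Fin n → Fin n → ℕ) : Fin n → Fin n → Prop :=
  Relation.ReflTransGen (fun a b => 0 < G a b ∨ 0 < G b a)

/-- A deterministic Markov decision problem with state space `S`, action
space `A` (all actions available at every state), deterministic transition
function `T`, reward function `R` and discount factor `gamma ∈ [0, 1)`. -/
structure DMDP (S A : Type*) where
  T : S → A → S
  R : S → A → ℝ
  gamma : ℝ
  gamma_nonneg : 0 ≤ gamma
  gamma_lt_one : gamma < 1

namespace DMDP

variable {S A : Type*}

/-- The trajectory of states obtained by following policy `π` from `s`. -/
def traj (M : DMDP S A) (π : S → A) (s : S) (t : ℕ) : S :=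
  (fun x => M.T x (π x))^[t] s

/-- The value function `V^π(s) = Σ_t γ^t R(s_t, π(s_t))`. -/
noncomputable def V (M : DMDP S A) (π : S → A) (s : S) : ℝ :=
  ∑' t : ℕ, M.gamma ^ t * M.R (M.traj π s t) (π (M.traj π s t))

/-- The action value function `Q^π(s, a) = R(s, a) + γ V^π(T(s, a))`. -/
noncomputable def Q (M : DMDP S A) (π : S → A) (s : S) (a : A) : ℝ :=
  M.R s a + M.gamma * M.V π (M.T s a)

/-- `π ≺ π'`: pointwise `V^π ≤ V^{π'}` with strict inequality somewhere. -/
def PLt (M : DMDP S A) (π π' : S → A) : Prop :=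
  (∀ s, M.V π s ≤ M.V π' s) ∧ ∃ s, M.V π s < M.V π' s

/-- `π'` is obtained from `π` by policy improvement with arbitrary action
selection. -/
def ImpStep (M : DMDP S A) (π π' : S → A) : Prop :=
  π' ≠ π ∧ ∀ s, π' s ≠ π s → M.V π s < M.Q π s (π' s)

/-- `π'` is obtained from `π` by policy improvement with max-gain action
selection. -/
def MaxGainStep (M : DMDP S A) (π π' : S → A) : Prop :=
  π' ≠ π ∧ ∀ s, π' s ≠ π s →
    M.V π s < M.Q π s (π' s) ∧
    ∀ a, M.V π s < M.Q π s a → M.Q π s a ≤ M.Q π s (π' s)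

/-- The first time step at which a previously visited state recurs on the
trajectory of `π` from `s`. -/
noncomputable def pcLen (M : DMDP S A) (π : S → A) (s : S) : ℕ :=
  sInf {t : ℕ | ∃ t' < t, M.traj π s t' = M.traj π s t}

/-- The path-cycle `P^π_s`: the sequence of state–action–state triples
`(s_t, π(s_t), s_{t+1})` for `t` up to (but excluding) the first recurrence
of a previously visited state. -/
noncomputable def pathCycle (M : DMDP S A) (π : S → A) (s : S) : List (S × A × S) :=
  (List.range (M.pcLen π s)).map fun t =>
    (M.traj π s t, π (M.traj π s t), M.traj π s (t + 1))

/-- The multiplicity function of the DMDP digraph `G_M`: one edge from `s`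
to `T(s, a)` for every action `a`. -/
noncomputable def digraph (M : DMDP S A) [Fintype A] : S → S → ℕ :=
  fun s s' => (Finset.univ.filter fun a => M.T s a = s').card

/-- A state is non-branching if all actions lead to the same next state. -/
def NonBranching (M : DMDP S A) (s : S) : Prop := ∃ s', ∀ a, M.T s a = s'

/-- The relation `∼` on path-cycles: same sequence of states, and wherever
the actions differ the state is non-branching. -/
def PCSim (M : DMDP S A) (P₁ P₂ : List (S × A × S)) : Prop :=
  P₁.length = P₂.length ∧
  ∀ (t : ℕ) (h₁ : t < P₁.length) (h₂ : t < P₂.length),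
    (P₁.get ⟨t, h₁⟩).1 = (P₂.get ⟨t, h₂⟩).1 ∧
    (P₁.get ⟨t, h₁⟩).2.2 = (P₂.get ⟨t, h₂⟩).2.2 ∧
    ((P₁.get ⟨t, h₁⟩).2.1 ≠ (P₂.get ⟨t, h₂⟩).2.1 → M.NonBranching (P₁.get ⟨t, h₁⟩).1)

/-- The relation `≈` on path-cycles: they differ only in equivalent edges,
i.e. have the same sequences of source and target states. -/
def PCApprox (_M : DMDP S A) (P₁ P₂ : List (S × A × S)) : Prop :=
  P₁.length = P₂.length ∧
  ∀ (t : ℕ) (h₁ : t < P₁.length) (h₂ : t < P₂.length),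
    (P₁.get ⟨t, h₁⟩).1 = (P₂.get ⟨t, h₂⟩).1 ∧
    (P₁.get ⟨t, h₁⟩).2.2 = (P₂.get ⟨t, h₂⟩).2.2

end DMDP

section AuxStmt19

variable {S A : Type*}

private lemma stmt19_V_congr (M : DMDP S A) (π π' : S → A)
    (hT : ∀ s, M.T s (π s) = M.T s (π' s))
    (hR : ∀ s, M.R s (π s) = M.R s (π' s)) : M.V π = M.V π' := by
  have hf : (fun x => M.T x (π x)) = (fun x => M.T x (π' x)) := funext hT
  have htraj : M.traj π = M.traj π' := by
    funext s t
    simp only [DMDP.traj, hf]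
  funext s
  simp only [DMDP.V, htraj]
  exact tsum_congr fun t => by rw [hR]

private lemma stmt19_switch_canonical (M : DMDP S A) (π π' : S → A)
    (h : M.MaxGainStep π π') (s : S) (hs : π' s ≠ π s)
    (a : A) (ha : M.T s a = M.T s (π' s)) :
    M.R s a ≤ M.R s (π' s) := by
  by_contra hlt
  push_neg at hlt
  obtain ⟨-, h2⟩ := h
  obtain ⟨h3, h4⟩ := h2 s hs
  have hQ : M.Q π s (π' s) < M.Q π s a := by
    simp only [DMDP.Q, ha]
    linarith
  have := h4 a (lt_trans h3 hQ)
  linarith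

/-- Max reward among actions leading from `s` to `t`. -/
private noncomputable def stmt19_mr (M : DMDP S A) (s t : S) : ℝ :=
  sSup {r : ℝ | ∃ a : A, M.T s a = t ∧ M.R s a = r}

/-- Canonical (target, reward) pairs at a state. -/
private noncomputable def stmt19_canon (M : DMDP S A) [Fintype A] (s : S) :
    Finset (S × ℝ) :=
  Finset.image (fun a : A => (M.T s a, stmt19_mr M s (M.T s a))) Finset.univ

private lemma stmt19_canon_card (M : DMDP S A) [Fintype S] [Fintype A] (s : S) :
    (stmt19_canon M s).card ≤ Fintype.card S := by
  have he : stmt19_canon M s =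
      Finset.image (fun t => (t, stmt19_mr M s t))
        (Finset.image (M.T s) Finset.univ) := by
    rw [Finset.image_image]
    rfl
  rw [he]
  calc (Finset.image (fun t => (t, stmt19_mr M s t))
        (Finset.image (M.T s) Finset.univ)).card
      ≤ (Finset.image (M.T s) Finset.univ).card := Finset.card_image_le
    _ ≤ (Finset.univ : Finset S).card := Finset.card_le_univ _
    _ = Fintype.card S := Finset.card_univ

private lemma stmt19_switch_mem_canon (M : DMDP S A) [Fintype A]
    (π π' : S → A) (h : M.MaxGainStep π π') (s : S) (hs : π' s ≠ π s) :
    (M.T s (π' s), M.R s (π' s)) ∈ stmt19_canon M s := by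
  have hg : IsGreatest {r : ℝ | ∃ a : A, M.T s a = M.T s (π' s) ∧ M.R s a = r}
      (M.R s (π' s)) := by
    constructor
    · exact ⟨π' s, rfl, rfl⟩
    · rintro r ⟨a, ha, rfl⟩
      exact stmt19_switch_canonical M π π' h s hs a ha
  have hmr : stmt19_mr M s (M.T s (π' s)) = M.R s (π' s) := hg.csSup_eq
  exact Finset.mem_image.mpr ⟨π' s, Finset.mem_univ _, by rw [hmr]⟩

end AuxStmt19

theorem stmt_19 {S A : Type*} [Fintype S] [Fintype A]
    (M : DMDP S A) (k : ℕ) (hS : Fintype.card S = 2)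
    (hA : Fintype.card A = k) (hk : 2 ≤ k)
    (ℓ : ℕ) (π : ℕ → S → A)
    (hchain : ∀ i < ℓ, M.PLt (π i) (π (i + 1)))
    (hstep : ∀ i < ℓ, M.MaxGainStep (π i) (π (i + 1))) :
    ℓ + 1 ≤ 7 := by
  rcases Nat.eq_zero_or_pos ℓ with rfl | hℓ
  · omega
  -- state switched at step 0
  have hmg0 := hstep 0 hℓ
  obtain ⟨s0, hs0⟩ := Function.ne_iff.mp hmg0.1
  -- the other state
  have hcard2 : (Finset.univ : Finset S).card = 2 := by
    rw [Finset.card_univ, hS]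
  obtain ⟨x, y, hxy, hunivxy⟩ := Finset.card_eq_two.mp hcard2
  have hsxy : ∀ s : S, s = x ∨ s = y := by
    intro s
    have := Finset.mem_univ s
    rw [hunivxy] at this
    simpa using this
  set s1 : S := if s0 = x then y else x with hs1
  have hcover : ∀ s : S, s = s0 ∨ s = s1 := by
    intro s
    rcases hsxy s with h | h <;> rcases hsxy s0 with h0 | h0 <;>
      simp [hs1, h, h0, hxy, Ne.symm hxy]
  -- monotonicity of values along the chain
  have hmono : ∀ i j, i ≤ j → j ≤ ℓ → ∀ s, M.V (π i) s ≤ M.V (π j) s := by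
    intro i j hij
    induction j, hij using Nat.le_induction with
    | base => exact fun _ s => le_rfl
    | succ j hj IH =>
      intro hle s
      exact le_trans (IH (by omega) s) ((hchain j (by omega)).1 s)
  have hVne : ∀ i j, i < j → j ≤ ℓ → M.V (π i) ≠ M.V (π j) := by
    intro i j hij hjl heq
    obtain ⟨s, hslt⟩ := (hchain i (by omega)).2
    have hle := hmono (i + 1) j (by omega) hjl s
    have : M.V (π i) s < M.V (π j) s := lt_of_lt_of_le hslt hle
    rw [heq] at this
    exact lt_irrefl _ this
  -- the signature function
  set sig : ℕ → (S × ℝ) × (S × ℝ) := fun i =>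
    ((M.T s0 (π i s0), M.R s0 (π i s0)), (M.T s1 (π i s1), M.R s1 (π i s1)))
    with hsigdef
  have hsig_ne : ∀ i j, i < j → j ≤ ℓ → sig i ≠ sig j := by
    intro i j hij hjl heq
    apply hVne i j hij hjl
    apply stmt19_V_congr
    · intro s
      rcases hcover s with rfl | rfl
      · exact congrArg (fun p => p.1.1) heq
      · exact congrArg (fun p => p.2.1) heq
    · intro s
      rcases hcover s with rfl | rfl
      · exact congrArg (fun p => p.1.2) heq
      · exact congrArg (fun p => p.2.2) heq
  have hinj : Set.InjOn sig (Finset.range (ℓ + 1) : Finset ℕ) := by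
    intro i hi j hj hij
    by_contra hne'
    simp only [Finset.coe_range, Set.mem_Iio] at hi hj
    rcases lt_trichotomy i j with h | h | h
    · exact hsig_ne i j h (by omega) hij
    · exact hne' h
    · exact hsig_ne j i h (by omega) hij.symm
  -- membership of signatures in a small finset
  have hpair0 : ∀ i, 1 ≤ i → i ≤ ℓ →
      (M.T s0 (π i s0), M.R s0 (π i s0)) ∈ stmt19_canon M s0 := by
    intro i
    induction i with
    | zero => omega
    | succ n IH =>
      intro _ h2
      by_cases hc : π (n + 1) s0 = π n s0
      · rcases Nat.eq_zero_or_pos n with rfl | hn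
        · exact absurd hc hs0
        · rw [hc]; exact IH hn (by omega)
      · exact stmt19_switch_mem_canon M (π n) (π (n + 1)) (hstep n (by omega)) s0 hc
  have hpair1 : ∀ i, i ≤ ℓ →
      (M.T s1 (π i s1), M.R s1 (π i s1)) ∈
        insert (M.T s1 (π 0 s1), M.R s1 (π 0 s1)) (stmt19_canon M s1) := by
    intro i
    induction i with
    | zero => exact fun _ => Finset.mem_insert_self _ _
    | succ n IH =>
      intro h2
      by_cases hc : π (n + 1) s1 = π n s1
      · rw [hc]; exact IH (by omega)
      · exact Finset.mem_insert_of_mem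
          (stmt19_switch_mem_canon M (π n) (π (n + 1)) (hstep n (by omega)) s1 hc)
  set B : Finset ((S × ℝ) × (S × ℝ)) :=
    insert (sig 0)
      ((stmt19_canon M s0) ×ˢ
        insert (M.T s1 (π 0 s1), M.R s1 (π 0 s1)) (stmt19_canon M s1)) with hBdef
  have hmem : ∀ i ∈ Finset.range (ℓ + 1), sig i ∈ B := by
    intro i hi
    rw [Finset.mem_range] at hi
    rcases Nat.eq_zero_or_pos i with rfl | hipos
    · exact Finset.mem_insert_self _ _
    · apply Finset.mem_insert_of_mem
      rw [Finset.mem_product]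
      exact ⟨hpair0 i hipos (by omega), hpair1 i (by omega)⟩
  have hcount : (Finset.range (ℓ + 1)).card ≤ B.card :=
    Finset.card_le_card_of_injOn sig hmem hinj
  have hc0 : (stmt19_canon M s0).card ≤ 2 := by
    have := stmt19_canon_card M s0; omega
  have hc1 : (stmt19_canon M s1).card ≤ 2 := by
    have := stmt19_canon_card M s1; omega
  have hBcard : B.card ≤ 7 := by
    calc B.card ≤ _ + 1 := Finset.card_insert_le _ _
      _ ≤ 2 * 3 + 1 := by
          have h1 : (insert (M.T s1 (π 0 s1), M.R s1 (π 0 s1))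
              (stmt19_canon M s1)).card ≤ 3 := by
            have := Finset.card_insert_le (M.T s1 (π 0 s1), M.R s1 (π 0 s1))
              (stmt19_canon M s1)
            omega
          have h2 := Finset.card_product (stmt19_canon M s0)
            (insert (M.T s1 (π 0 s1), M.R s1 (π 0 s1)) (stmt19_canon M s1))
          have h3 : ((stmt19_canon M s0) ×ˢ
              insert (M.T s1 (π 0 s1), M.R s1 (π 0 s1))
                (stmt19_canon M s1)).card ≤ 2 * 3 := by
            rw [h2]
            exact Nat.mul_le_mul hc0 h1
          omega
      _ = 7 := by norm_num
  rw [Finset.card_range] at hcount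
  omega
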